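/- arXiv:math/0507494 — 4 statements merged into one kernel-verified Lean document; each statement's English description precedes it below -/
import Mathlib

section
/- The ring of invariants of the two-dimensional torus T = (ℂ*)² acting on ℂ[X₂,X₃,Y₂,Y₃] by (λ,μ)·X₂ = λ⁻¹μX₂, (λ,μ)·X₃ = λμ⁻¹X₃, (λ,μ)·Y₂ = λ⁻¹μY₂, (λ,μ)·Y₃ = λμ⁻¹Y₃ is the subalgebra generated by the monomials X₂X₃, X₂Y₃, X₃Y₂, Y₂Y₃, and this subalgebra is isomorphic to ℂ[p,q,r,s]/(ps−qr). -/
/-!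
A monomial `X₂^a X₃^b Y₂^c Y₃^d` is an eigenvector of `(λ, μ)` with eigenvalue
`(λ⁻¹μ)^(a+c) (λμ⁻¹)^(b+d)`, so the invariants are spanned by the monomials with `a + c = b + d`,
and each of these is a product of powers of `X₂X₃, X₂Y₃, X₃Y₂, Y₂Y₃`.

The map `ℂ[p,q,r,s] → ℂ[X₂,X₃,Y₂,Y₃]` onto the generators kills `ps - qr`. Modulo `ps - qr`
every monomial `p^a q^b r^c s^d` can be moved to one with `min a d = 0`, and the map is injective
on the exponents of those; sending each monomial of the target back to its normal-form preimage
gives a linear left inverse modulo `ps - qr`, so `ps - qr` generates the kernel.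
-/

open MvPolynomial

/-- The action of `(λ, μ) ∈ T = ℂ* × ℂ*` on `ℂ[X₂, X₃, Y₂, Y₃]` (variables indexed
`0 = X₂`, `1 = X₃`, `2 = Y₂`, `3 = Y₃`) by
`X₂ ↦ λ⁻¹μ X₂`, `X₃ ↦ λμ⁻¹ X₃`, `Y₂ ↦ λ⁻¹μ Y₂`, `Y₃ ↦ λμ⁻¹ Y₃`. -/
noncomputable def torusAct (l m : ℂˣ) :
    MvPolynomial (Fin 4) ℂ →ₐ[ℂ] MvPolynomial (Fin 4) ℂ :=
  aeval ![((l : ℂ)⁻¹ * (m : ℂ)) • X 0, ((l : ℂ) * (m : ℂ)⁻¹) • X 1,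
    ((l : ℂ)⁻¹ * (m : ℂ)) • X 2, ((l : ℂ) * (m : ℂ)⁻¹) • X 3]

/-- The monomials `X₂X₃`, `X₂Y₃`, `X₃Y₂`, `Y₂Y₃`. -/
noncomputable def torusGens : Set (MvPolynomial (Fin 4) ℂ) :=
  {X 0 * X 1, X 0 * X 3, X 1 * X 2, X 2 * X 3}

theorem coeff_aeval_smul_X {σ R : Type*} [CommSemiring R] (c : σ → R)
    (f : MvPolynomial σ R) (b : σ →₀ ℕ) :
    coeff b (aeval (fun i => c i • X i) f) = (b.prod fun i n => c i ^ n) * coeff b f := by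
  classical
  induction f using MvPolynomial.induction_on' with
  | monomial a r =>
    have : aeval (fun i => c i • X i) (monomial a r) =
        monomial a ((a.prod fun i n => c i ^ n) * r) := by
      rw [aeval_monomial, monomial_eq, C_mul, algebraMap_eq]
      simp only [Finsupp.prod, smul_eq_C_mul, mul_pow, Finset.prod_mul_distrib, map_prod, C_pow]
      ring
    rw [this, coeff_monomial, coeff_monomial]
    split_ifs with h
    · rw [h]
    · rw [mul_zero]
  | add p q hp hq => simp only [map_add, coeff_add, hp, hq, mul_add]

theorem monomial_eq_C_mul_X_pow {R : Type*} [CommSemiring R] (a : Fin 4 →₀ ℕ) (c : R) :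
    monomial a c = C c * (X 0 ^ a 0 * X 1 ^ a 1 * X 2 ^ a 2 * X 3 ^ a 3) := by
  rw [monomial_eq, Finsupp.prod_fintype _ _ fun _ => pow_zero _, Fin.prod_univ_four]

theorem pow_mul_pow_normalize {M : Type*} [CommMonoid M] {p q r s : M} (h : p * s = q * r)
    (a b c d : ℕ) :
    p ^ (a - d) * q ^ (b + min a d) * r ^ (c + min a d) * s ^ (d - a) =
      p ^ a * q ^ b * r ^ c * s ^ d := by
  rcases le_total a d with had | hda
  · obtain ⟨k, rfl⟩ := Nat.exists_eq_add_of_le had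
    rw [Nat.sub_eq_zero_of_le had, min_eq_left had, Nat.add_sub_cancel_left,
      show p ^ a * q ^ b * r ^ c * s ^ (a + k) = (p * s) ^ a * q ^ b * r ^ c * s ^ k by
        rw [mul_pow, pow_add]; ac_rfl, h, mul_pow, pow_zero, one_mul, pow_add, pow_add]
    ac_rfl
  · obtain ⟨k, rfl⟩ := Nat.exists_eq_add_of_le hda
    rw [Nat.sub_eq_zero_of_le hda, min_eq_right hda, Nat.add_sub_cancel_left,
      show p ^ (d + k) * q ^ b * r ^ c * s ^ d = (p * s) ^ d * p ^ k * q ^ b * r ^ c by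
        rw [mul_pow, pow_add]; ac_rfl, h, mul_pow, pow_zero, mul_one, pow_add, pow_add]
    ac_rfl

theorem coeff_torusAct (l m : ℂˣ) (f : MvPolynomial (Fin 4) ℂ) (b : Fin 4 →₀ ℕ) :
    coeff b (torusAct l m f) =
      ((l : ℂ)⁻¹ * m) ^ (b 0 + b 2) * ((l : ℂ) * (m : ℂ)⁻¹) ^ (b 1 + b 3) * coeff b f := by
  have hdiag : torusAct l m = aeval fun i =>
      ![(l : ℂ)⁻¹ * m, (l : ℂ) * (m : ℂ)⁻¹, (l : ℂ)⁻¹ * m, (l : ℂ) * (m : ℂ)⁻¹] i • X i := by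
    unfold torusAct
    congr 1
    funext i
    fin_cases i <;> rfl
  rw [hdiag, coeff_aeval_smul_X, Finsupp.prod_fintype _ _ fun _ => pow_zero _, Fin.prod_univ_four]
  simp only [Fin.isValue, Matrix.cons_val, pow_add]
  ring

theorem exponent_balanced_of_invariant {f : MvPolynomial (Fin 4) ℂ}
    (hf : ∀ l m : ℂˣ, torusAct l m f = f) {a : Fin 4 →₀ ℕ} (ha : a ∈ f.support) :
    a 0 + a 2 = a 1 + a 3 := by
  have hcoeff := congrArg (coeff a) (hf 1 (Units.mk0 2 two_ne_zero))
  rw [coeff_torusAct, Units.val_one, Units.val_mk0, inv_one, one_mul, one_mul] at hcoeff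
  have hweight : (2 : ℂ) ^ (a 0 + a 2) * 2⁻¹ ^ (a 1 + a 3) = 1 :=
    (mul_eq_right₀ (mem_support_iff.mp ha)).mp hcoeff
  have hpow : (2 : ℂ) ^ (a 0 + a 2) = 2 ^ (a 1 + a 3) := by
    rw [inv_pow] at hweight
    field_simp at hweight
    exact hweight
  exact Nat.pow_right_injective le_rfl (by exact_mod_cast hpow)

theorem X_pow_mul_mem_adjoin_torusGens {w x y z : ℕ} (h : w + y = x + z) :
    X 0 ^ w * X 1 ^ x * X 2 ^ y * X 3 ^ z ∈ Algebra.adjoin ℂ torusGens := by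
  have hgen : ∀ p ∈ torusGens, p ∈ Algebra.adjoin ℂ torusGens :=
    fun _ hp => Algebra.subset_adjoin hp
  rcases le_total w x with hwx | hxw
  · obtain ⟨d, rfl⟩ := Nat.exists_eq_add_of_le hwx
    obtain rfl : y = d + z := by omega
    rw [show (X 0 ^ w * X 1 ^ (w + d) * X 2 ^ (d + z) * X 3 ^ z : MvPolynomial (Fin 4) ℂ) =
      (X 0 * X 1) ^ w * (X 1 * X 2) ^ d * (X 2 * X 3) ^ z by ring]
    refine mul_mem (mul_mem (pow_mem ?_ _) (pow_mem ?_ _)) (pow_mem ?_ _) <;>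
      exact hgen _ (by simp [torusGens])
  · obtain ⟨d, rfl⟩ := Nat.exists_eq_add_of_le hxw
    obtain rfl : z = d + y := by omega
    rw [show (X 0 ^ (x + d) * X 1 ^ x * X 2 ^ y * X 3 ^ (d + y) : MvPolynomial (Fin 4) ℂ) =
      (X 0 * X 1) ^ x * (X 0 * X 3) ^ d * (X 2 * X 3) ^ y by ring]
    refine mul_mem (mul_mem (pow_mem ?_ _) (pow_mem ?_ _)) (pow_mem ?_ _) <;>
      exact hgen _ (by simp [torusGens])

theorem mem_adjoin_torusGens_of_invariant {f : MvPolynomial (Fin 4) ℂ}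
    (hf : ∀ l m : ℂˣ, torusAct l m f = f) : f ∈ Algebra.adjoin ℂ torusGens := by
  rw [← f.support_sum_monomial_coeff]
  refine Subalgebra.sum_mem _ fun a ha => ?_
  rw [monomial_eq_C_mul_X_pow, ← smul_eq_C_mul]
  exact Subalgebra.smul_mem _
    (X_pow_mul_mem_adjoin_torusGens (exponent_balanced_of_invariant hf ha)) _

theorem torusAct_eqOn_adjoin_torusGens (l m : ℂˣ) :
    Set.EqOn (torusAct l m) (AlgHom.id ℂ _) (Algebra.adjoin ℂ torusGens) := by
  refine AlgHom.eqOn_adjoin_iff.mpr ?_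
  have hu : ((l : ℂ)⁻¹ * m) * (l * (m : ℂ)⁻¹) = 1 := by field_simp
  have hv : ((l : ℂ) * (m : ℂ)⁻¹) * ((l : ℂ)⁻¹ * m) = 1 := by field_simp
  rintro p (rfl | rfl | rfl | rfl) <;>
  simp only [torusAct, map_mul, aeval_X, AlgHom.id_apply, Fin.isValue, Matrix.cons_val,
    smul_mul_smul_comm, hu, hv, one_smul]

section Conifold

variable (R : Type*) [CommRing R]

-- The source variables `X 0, X 1, X 2, X 3` play the roles of `p, q, r, s`.
noncomputable def conifoldMap : MvPolynomial (Fin 4) R →ₐ[R] MvPolynomial (Fin 4) R :=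
  aeval ![X 0 * X 1, X 0 * X 3, X 1 * X 2, X 2 * X 3]

local notation "conifoldIdeal" => Ideal.span {(X 0 : MvPolynomial (Fin 4) R) * X 3 - X 1 * X 2}

/- `X^e` goes to the class of the unique monomial `p^a q^b r^c s^d` with `min a d = 0` that
`conifoldMap` sends to `X^e`, whenever `e` lies in the image of exponents. -/
noncomputable def conifoldRetraction :
    MvPolynomial (Fin 4) R →ₗ[R] MvPolynomial (Fin 4) R ⧸ conifoldIdeal :=
  (basisMonomials (Fin 4) R).constr R fun e => Ideal.Quotient.mk _
    (X 0 ^ (e 1 - e 2) * X 1 ^ min (e 0) (e 3) * X 2 ^ min (e 1) (e 2) * X 3 ^ (e 2 - e 1))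

variable {R}

theorem conifoldMap_X_pow (a b c d : ℕ) :
    conifoldMap R (X 0 ^ a * X 1 ^ b * X 2 ^ c * X 3 ^ d) =
      X 0 ^ (a + b) * X 1 ^ (a + c) * X 2 ^ (c + d) * X 3 ^ (b + d) := by
  simp only [conifoldMap, map_mul, map_pow, aeval_X, Fin.isValue, Matrix.cons_val]
  ring

theorem conifoldRetraction_X_pow (w x y z : ℕ) :
    conifoldRetraction R (X 0 ^ w * X 1 ^ x * X 2 ^ y * X 3 ^ z) = Ideal.Quotient.mk _
      (X 0 ^ (x - y) * X 1 ^ min w z * X 2 ^ min x y * X 3 ^ (y - x)) := by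
  set e : Fin 4 →₀ ℕ := Finsupp.equivFunOnFinite.symm ![w, x, y, z]
  have he : X 0 ^ w * X 1 ^ x * X 2 ^ y * X 3 ^ z = basisMonomials (Fin 4) R e := by
    rw [coe_basisMonomials]
    show _ = monomial e 1
    rw [monomial_eq_C_mul_X_pow, C_1, one_mul]
    rfl
  rw [he, conifoldRetraction, Module.Basis.constr_basis]
  rfl

theorem mk_X_pow_normalize (a b c d : ℕ) :
    Ideal.Quotient.mk conifoldIdeal
      (X 0 ^ (a - d) * X 1 ^ (b + min a d) * X 2 ^ (c + min a d) * X 3 ^ (d - a)) =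
    Ideal.Quotient.mk _ (X 0 ^ a * X 1 ^ b * X 2 ^ c * X 3 ^ d) := by
  have hrel : Ideal.Quotient.mk conifoldIdeal (X 0 * X 3) = Ideal.Quotient.mk _ (X 1 * X 2) :=
    Ideal.Quotient.eq.mpr (Ideal.subset_span rfl)
  simp only [map_mul, map_pow] at hrel ⊢
  exact pow_mul_pow_normalize hrel a b c d

theorem conifoldRetraction_comp_conifoldMap :
    conifoldRetraction R ∘ₗ (conifoldMap R).toLinearMap =
      (Ideal.Quotient.mkₐ R conifoldIdeal).toLinearMap := by
  refine (basisMonomials (Fin 4) R).ext fun a => ?_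
  simp only [coe_basisMonomials, LinearMap.comp_apply, AlgHom.toLinearMap_apply,
    Ideal.Quotient.mkₐ_eq_mk, monomial_eq_C_mul_X_pow, C_1, one_mul, conifoldMap_X_pow,
    conifoldRetraction_X_pow]
  rw [← mk_X_pow_normalize (a 0) (a 1) (a 2) (a 3),
    show a 0 + a 2 - (a 2 + a 3) = a 0 - a 3 by omega,
    show a 2 + a 3 - (a 0 + a 2) = a 3 - a 0 by omega,
    show min (a 0 + a 1) (a 1 + a 3) = a 1 + min (a 0) (a 3) by omega,
    show min (a 0 + a 2) (a 2 + a 3) = a 2 + min (a 0) (a 3) by omega]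

theorem ker_conifoldMap : RingHom.ker (conifoldMap R) = conifoldIdeal := by
  refine le_antisymm (fun f hf => ?_) ?_
  · rw [← Ideal.Quotient.eq_zero_iff_mem, ← Ideal.Quotient.mkₐ_eq_mk R,
      ← AlgHom.toLinearMap_apply, ← conifoldRetraction_comp_conifoldMap, LinearMap.comp_apply,
      AlgHom.toLinearMap_apply, RingHom.mem_ker.mp hf, map_zero]
  · rw [Ideal.span_le, Set.singleton_subset_iff, SetLike.mem_coe, RingHom.mem_ker]
    simp only [conifoldMap, map_sub, map_mul, aeval_X, Fin.isValue, Matrix.cons_val]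
    ring

end Conifold

theorem range_conifoldMap : (conifoldMap ℂ).range = Algebra.adjoin ℂ torusGens := by
  rw [conifoldMap, ← Algebra.adjoin_range_eq_range_aeval]
  congr 1
  simp only [torusGens, Matrix.range_cons, Matrix.range_empty, Set.union_empty,
    Set.singleton_union]

/-- The ring of invariants of the torus `T = (ℂ*)²` acting on `ℂ[X₂,X₃,Y₂,Y₃]` is the
subalgebra generated by `X₂X₃, X₂Y₃, X₃Y₂, Y₂Y₃`, and this subalgebra is isomorphic to
`ℂ[p,q,r,s]/(ps - qr)`. -/
theorem torus_invariants_eq_adjoin_and_iso_conifold :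
    (∀ f : MvPolynomial (Fin 4) ℂ,
      (∀ l m : ℂˣ, torusAct l m f = f) ↔ f ∈ Algebra.adjoin ℂ torusGens) ∧
    Nonempty ((Algebra.adjoin ℂ torusGens) ≃ₐ[ℂ]
      (MvPolynomial (Fin 4) ℂ ⧸
        Ideal.span {(X 0 : MvPolynomial (Fin 4) ℂ) * X 3 - X 1 * X 2})) :=
  ⟨fun _ => ⟨mem_adjoin_torusGens_of_invariant,
      fun hf l m => torusAct_eqOn_adjoin_torusGens l m hf⟩,
    ⟨(Subalgebra.equivOfEq _ _ range_conifoldMap.symm).trans <|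
      (Ideal.quotientKerEquivRange _).symm.trans (Ideal.quotientEquivAlgOfEq ℂ ker_conifoldMap)⟩⟩
end

section
/- In the conifold algebra Λ_c, the element D = XYZ − YXZ is central, i.e., D commutes with X, Y, and Z. -/
open FreeAlgebra

/-- The defining relations of the conifold algebra
`ℂ⟨X,Y,Z⟩/(Z²-1, XZ+ZX, YZ+ZY, [X²,Y], [Y²,X])`, with generators indexed
`0 = X`, `1 = Y`, `2 = Z`. -/
inductive ConifoldRel : FreeAlgebra ℂ (Fin 3) → FreeAlgebra ℂ (Fin 3) → Prop
  | z2 : ConifoldRel (ι ℂ (2 : Fin 3) * ι ℂ 2) 1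
  | xz : ConifoldRel (ι ℂ (0 : Fin 3) * ι ℂ 2 + ι ℂ 2 * ι ℂ 0) 0
  | yz : ConifoldRel (ι ℂ (1 : Fin 3) * ι ℂ 2 + ι ℂ 2 * ι ℂ 1) 0
  | x2y : ConifoldRel (ι ℂ (0 : Fin 3) * ι ℂ 0 * ι ℂ 1) (ι ℂ 1 * (ι ℂ 0 * ι ℂ 0))
  | y2x : ConifoldRel (ι ℂ (1 : Fin 3) * ι ℂ 1 * ι ℂ 0) (ι ℂ 0 * (ι ℂ 1 * ι ℂ 1))

/-- The conifold algebra `Λ_c`. -/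
abbrev ConifoldAlgebra := RingQuot ConifoldRel

/-- The generator `X` of the conifold algebra. -/
noncomputable def Xc : ConifoldAlgebra := RingQuot.mkAlgHom ℂ ConifoldRel (ι ℂ 0)

/-- The generator `Y` of the conifold algebra. -/
noncomputable def Yc : ConifoldAlgebra := RingQuot.mkAlgHom ℂ ConifoldRel (ι ℂ 1)

/-- The generator `Z` of the conifold algebra. -/
noncomputable def Zc : ConifoldAlgebra := RingQuot.mkAlgHom ℂ ConifoldRel (ι ℂ 2)

private lemma A1 (a b c : ConifoldAlgebra) : a * b * c = a * (b * c) := mul_assoc a b c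
private lemma A2 (a b : ConifoldAlgebra) : a * -b = -(a * b) := mul_neg a b
private lemma A3 (a b : ConifoldAlgebra) : -a * b = -(a * b) := neg_mul a b
private lemma A4 (a : ConifoldAlgebra) : - -a = a := neg_neg a
private lemma A5 (a b c : ConifoldAlgebra) : (a - b) * c = a * c - b * c := sub_mul a b c
private lemma A6 (a b c : ConifoldAlgebra) : a * (b - c) = a * b - a * c := mul_sub a b c
private lemma A7 (a : ConifoldAlgebra) : a * 1 = a := mul_one a
private lemma A8 (a b : ConifoldAlgebra) : -a - -b = b - a := neg_sub_neg a b

/-- In the conifold algebra, `D = XYZ - YXZ` commutes with `X`, `Y` and `Z`,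
i.e. `D` is central. -/
theorem conifold_D_central :
    (Xc * Yc * Zc - Yc * Xc * Zc) * Xc = Xc * (Xc * Yc * Zc - Yc * Xc * Zc) ∧
    (Xc * Yc * Zc - Yc * Xc * Zc) * Yc = Yc * (Xc * Yc * Zc - Yc * Xc * Zc) ∧
    (Xc * Yc * Zc - Yc * Xc * Zc) * Zc = Zc * (Xc * Yc * Zc - Yc * Xc * Zc) := by
  have hzz : Zc * Zc = 1 := by
    simpa [Zc, map_mul] using RingQuot.mkAlgHom_rel ℂ ConifoldRel.z2
  have hxz : Xc * Zc + Zc * Xc = 0 := by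
    simpa [Xc, Zc, map_mul, map_add] using RingQuot.mkAlgHom_rel ℂ ConifoldRel.xz
  have hyz : Yc * Zc + Zc * Yc = 0 := by
    simpa [Yc, Zc, map_mul, map_add] using RingQuot.mkAlgHom_rel ℂ ConifoldRel.yz
  have hzx : Zc * Xc = -(Xc * Zc) := by rwa [add_comm, add_eq_zero_iff_eq_neg] at hxz
  have hzy : Zc * Yc = -(Yc * Zc) := by rwa [add_comm, add_eq_zero_iff_eq_neg] at hyz
  have hxxy : Xc * Xc * Yc = Yc * (Xc * Xc) := by
    simpa [Xc, Yc, map_mul] using RingQuot.mkAlgHom_rel ℂ ConifoldRel.x2y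
  have hyyx : Yc * Yc * Xc = Xc * (Yc * Yc) := by
    simpa [Xc, Yc, map_mul] using RingQuot.mkAlgHom_rel ℂ ConifoldRel.y2x
  have key1 : Xc * (Xc * (Yc * Zc)) = Yc * (Xc * (Xc * Zc)) := by
    calc Xc * (Xc * (Yc * Zc)) = Xc * Xc * Yc * Zc := by simp [mul_assoc]
    _ = Yc * (Xc * Xc) * Zc := by rw [hxxy]
    _ = Yc * (Xc * (Xc * Zc)) := by simp [mul_assoc]
  have key2 : Yc * (Yc * (Xc * Zc)) = Xc * (Yc * (Yc * Zc)) := by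
    calc Yc * (Yc * (Xc * Zc)) = Yc * Yc * Xc * Zc := by simp [mul_assoc]
    _ = Xc * (Yc * Yc) * Zc := by rw [hyyx]
    _ = Xc * (Yc * (Yc * Zc)) := by simp [mul_assoc]
  have key3 : Zc * (Xc * (Yc * Zc)) = Xc * Yc := by
    calc Zc * (Xc * (Yc * Zc)) = Zc * Xc * (Yc * Zc) := (A1 _ _ _).symm
    _ = -(Xc * Zc) * (Yc * Zc) := by rw [hzx]
    _ = -(Xc * (Zc * (Yc * Zc))) := by rw [A3, A1]
    _ = -(Xc * (Zc * Yc * Zc)) := by rw [A1 Zc Yc Zc]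
    _ = -(Xc * (-(Yc * Zc) * Zc)) := by rw [hzy]
    _ = - -(Xc * (Yc * (Zc * Zc))) := by rw [A3, A1, A2]
    _ = Xc * (Yc * (Zc * Zc)) := A4 _
    _ = Xc * (Yc * 1) := by rw [hzz]
    _ = Xc * Yc := by rw [A7]
  have key4 : Zc * (Yc * (Xc * Zc)) = Yc * Xc := by
    calc Zc * (Yc * (Xc * Zc)) = Zc * Yc * (Xc * Zc) := (A1 _ _ _).symm
    _ = -(Yc * Zc) * (Xc * Zc) := by rw [hzy]
    _ = -(Yc * (Zc * (Xc * Zc))) := by rw [A3, A1]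
    _ = -(Yc * (Zc * Xc * Zc)) := by rw [A1 Zc Xc Zc]
    _ = -(Yc * (-(Xc * Zc) * Zc)) := by rw [hzx]
    _ = - -(Yc * (Xc * (Zc * Zc))) := by rw [A3, A1, A2]
    _ = Yc * (Xc * (Zc * Zc)) := A4 _
    _ = Yc * (Xc * 1) := by rw [hzz]
    _ = Yc * Xc := by rw [A7]
  refine ⟨?_, ?_, ?_⟩
  · simp only [A5, A6, A1]
    rw [hzx, key1]
    simp only [A2]
    rw [A8]
  · simp only [A5, A6, A1]
    rw [hzy, key2]
    simp only [A2]
    rw [A8]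
  · simp only [A5, A6, A1]
    rw [hzz, key3, key4]
    simp only [A7]
end

section
/- The two presentations ℂ⟨X,Y,Z⟩/(Z²−1, XZ+ZX, YZ+ZY, [X²,Y], [Y²,X]) and ℂ⟨X,Y,Z⟩/(Z²−1, XZ+ZX, YZ+ZY, [Z[X,Y],X], [Z[X,Y],Y]) define isomorphic ℂ-algebras. -/
open FreeAlgebra

/-- The second presentation of the conifold algebra, with relations
`Z² - 1`, `XZ + ZX`, `YZ + ZY`, `[Z[X,Y], X]`, `[Z[X,Y], Y]`. -/
inductive ConifoldRel' : FreeAlgebra ℂ (Fin 3) → FreeAlgebra ℂ (Fin 3) → Prop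
  | z2 : ConifoldRel' (ι ℂ (2 : Fin 3) * ι ℂ 2) 1
  | xz : ConifoldRel' (ι ℂ (0 : Fin 3) * ι ℂ 2 + ι ℂ 2 * ι ℂ 0) 0
  | yz : ConifoldRel' (ι ℂ (1 : Fin 3) * ι ℂ 2 + ι ℂ 2 * ι ℂ 1) 0
  | wx : ConifoldRel'
      ((ι ℂ (2 : Fin 3) * (ι ℂ 0 * ι ℂ 1 - ι ℂ 1 * ι ℂ 0)) * ι ℂ 0)
      (ι ℂ 0 * (ι ℂ (2 : Fin 3) * (ι ℂ 0 * ι ℂ 1 - ι ℂ 1 * ι ℂ 0)))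
  | wy : ConifoldRel'
      ((ι ℂ (2 : Fin 3) * (ι ℂ 0 * ι ℂ 1 - ι ℂ 1 * ι ℂ 0)) * ι ℂ 1)
      (ι ℂ 1 * (ι ℂ (2 : Fin 3) * (ι ℂ 0 * ι ℂ 1 - ι ℂ 1 * ι ℂ 0)))


section Aux
variable {R : Type*} [Ring R]

/-- From the commutator relations `[z[x,y],x]=0` (plus `z²=1`, `xz+zx=0`) deduce `[x²,y]=0`. -/
lemma key_forward (x y z : R) (hz : z * z = 1) (hxz : x * z + z * x = 0)
    (hw : (z * (x * y - y * x)) * x = x * (z * (x * y - y * x))) :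
    x * x * y = y * (x * x) := by
  have h0 : z * (x * x * y - y * (x * x)) = 0 := by
    have : z * (x * x * y - y * (x * x)) =
        ((z * (x * y - y * x)) * x - x * (z * (x * y - y * x)))
          + (x * z + z * x) * (x * y - y * x) := by noncomm_ring
    rw [this, hw, hxz, sub_self, zero_mul, add_zero]
  have h1 : z * (z * (x * x * y - y * (x * x))) = 0 := by rw [h0, mul_zero]
  rw [← mul_assoc, hz, one_mul, sub_eq_zero] at h1
  exact h1

/-- From `[x²,y]=0` (plus `xz+zx=0`) deduce `[z[x,y],x]=0`. -/
lemma key_backward (x y z : R) (hxz : x * z + z * x = 0)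
    (h : x * x * y = y * (x * x)) :
    (z * (x * y - y * x)) * x = x * (z * (x * y - y * x)) := by
  have : (z * (x * y - y * x)) * x - x * (z * (x * y - y * x)) =
      z * (x * x * y - y * (x * x)) - (x * z + z * x) * (x * y - y * x) := by
    noncomm_ring
  rw [h, sub_self, mul_zero, hxz, zero_mul, sub_self] at this
  exact sub_eq_zero.mp this

/-- Swap the commutator's sign. -/
lemma swap_comm (a b w z : R)
    (h : (z * (a - b)) * w = w * (z * (a - b))) :
    (z * (b - a)) * w = w * (z * (b - a)) := by
  rw [← neg_sub a b, mul_neg, neg_mul, h, mul_neg]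

end Aux

/-- The two presentations of the conifold algebra define isomorphic ℂ-algebras. -/


theorem conifold_presentations_isomorphic :
    Nonempty (ConifoldAlgebra ≃ₐ[ℂ] RingQuot ConifoldRel') := by
  classical
  -- map from first presentation to second
  have hfwd : ∀ ⦃a b : FreeAlgebra ℂ (Fin 3)⦄, ConifoldRel a b →
      RingQuot.mkAlgHom ℂ ConifoldRel' a = RingQuot.mkAlgHom ℂ ConifoldRel' b := by
    intro a b hab
    set x := RingQuot.mkAlgHom ℂ ConifoldRel' (ι ℂ 0) with hxdef
    set y := RingQuot.mkAlgHom ℂ ConifoldRel' (ι ℂ 1) with hydef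
    set z := RingQuot.mkAlgHom ℂ ConifoldRel' (ι ℂ 2) with hzdef
    have hz : z * z = 1 := by
      have := RingQuot.mkAlgHom_rel ℂ ConifoldRel'.z2
      simpa using this
    have hxz : x * z + z * x = 0 := by
      have := RingQuot.mkAlgHom_rel ℂ ConifoldRel'.xz
      simpa using this
    have hyz : y * z + z * y = 0 := by
      have := RingQuot.mkAlgHom_rel ℂ ConifoldRel'.yz
      simpa using this
    have hwx : (z * (x * y - y * x)) * x = x * (z * (x * y - y * x)) := by
      have := RingQuot.mkAlgHom_rel ℂ ConifoldRel'.wx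
      simpa using this
    have hwy : (z * (x * y - y * x)) * y = y * (z * (x * y - y * x)) := by
      have := RingQuot.mkAlgHom_rel ℂ ConifoldRel'.wy
      simpa using this
    have hwy' : (z * (y * x - x * y)) * y = y * (z * (y * x - x * y)) := by
      exact swap_comm (x * y) (y * x) y z hwy
    cases hab with
    | z2 => simpa using hz
    | xz => simpa using hxz
    | yz => simpa using hyz
    | x2y => simpa using key_forward x y z hz hxz hwx
    | y2x => simpa using key_forward y x z hz hyz hwy'
  have hbwd : ∀ ⦃a b : FreeAlgebra ℂ (Fin 3)⦄, ConifoldRel' a b →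
      RingQuot.mkAlgHom ℂ ConifoldRel a = RingQuot.mkAlgHom ℂ ConifoldRel b := by
    intro a b hab
    set x := RingQuot.mkAlgHom ℂ ConifoldRel (ι ℂ 0) with hxdef
    set y := RingQuot.mkAlgHom ℂ ConifoldRel (ι ℂ 1) with hydef
    set z := RingQuot.mkAlgHom ℂ ConifoldRel (ι ℂ 2) with hzdef
    have hz : z * z = 1 := by
      have := RingQuot.mkAlgHom_rel ℂ ConifoldRel.z2
      simpa using this
    have hxz : x * z + z * x = 0 := by
      have := RingQuot.mkAlgHom_rel ℂ ConifoldRel.xz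
      simpa using this
    have hyz : y * z + z * y = 0 := by
      have := RingQuot.mkAlgHom_rel ℂ ConifoldRel.yz
      simpa using this
    have hx2y : x * x * y = y * (x * x) := by
      have := RingQuot.mkAlgHom_rel ℂ ConifoldRel.x2y
      simpa using this
    have hy2x : y * y * x = x * (y * y) := by
      have := RingQuot.mkAlgHom_rel ℂ ConifoldRel.y2x
      simpa using this
    cases hab with
    | z2 => simpa using hz
    | xz => simpa using hxz
    | yz => simpa using hyz
    | wx => simpa using key_backward x y z hxz hx2y
    | wy =>
      have := key_backward y x z hyz hy2x
      have h2 : (z * (x * y - y * x)) * y = y * (z * (x * y - y * x)) := by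
        exact swap_comm (y * x) (x * y) y z this
      simpa using h2
  let f : ConifoldAlgebra →ₐ[ℂ] RingQuot ConifoldRel' :=
    RingQuot.liftAlgHom ℂ ⟨RingQuot.mkAlgHom ℂ ConifoldRel', hfwd⟩
  let g : RingQuot ConifoldRel' →ₐ[ℂ] ConifoldAlgebra :=
    RingQuot.liftAlgHom ℂ ⟨RingQuot.mkAlgHom ℂ ConifoldRel, hbwd⟩
  refine ⟨AlgEquiv.ofAlgHom f g ?_ ?_⟩
  · apply RingQuot.ringQuot_ext'
    apply FreeAlgebra.hom_ext
    funext i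
    simp [f, g, RingQuot.liftAlgHom_mkAlgHom_apply]
  · apply RingQuot.ringQuot_ext'
    apply FreeAlgebra.hom_ext
    funext i
    simp [f, g, RingQuot.liftAlgHom_mkAlgHom_apply]
end

section
/- The algebra S = ℂ⟨X,Y⟩/([X²,Y],[Y²,X]) is isomorphic to the Ore extension ℂ[z,X][Y;σ,δ] where σ is the ℂ[z]-algebra automorphism with σ(X) = −X, σ(z) = z, and δ is the σ-derivation with δ(X) = 2z, δ(z) = 0, via the map sending X ↦ X and Y ↦ Y. -/
open FreeAlgebra

/-- The defining relations of `S = ℂ⟨X,Y⟩/([X²,Y],[Y²,X])`, generators `0 = X`, `1 = Y`. -/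
inductive SRel : FreeAlgebra ℂ (Fin 2) → FreeAlgebra ℂ (Fin 2) → Prop
  | x2y : SRel (ι ℂ (0 : Fin 2) * ι ℂ 0 * ι ℂ 1) (ι ℂ 1 * (ι ℂ 0 * ι ℂ 0))
  | y2x : SRel (ι ℂ (1 : Fin 2) * ι ℂ 1 * ι ℂ 0) (ι ℂ 0 * (ι ℂ 1 * ι ℂ 1))

/-- The defining relations of the Ore extension `ℂ[z,X][Y;σ,δ]` with
`σ(X) = -X`, `σ(z) = z`, `δ(X) = 2z`, `δ(z) = 0`, presented on generators
`0 = z`, `1 = X`, `2 = Y`: `z` is central and `YX = -XY + 2z`. -/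
inductive OreRel : FreeAlgebra ℂ (Fin 3) → FreeAlgebra ℂ (Fin 3) → Prop
  | zX : OreRel (ι ℂ (0 : Fin 3) * ι ℂ 1) (ι ℂ 1 * ι ℂ 0)
  | zY : OreRel (ι ℂ (0 : Fin 3) * ι ℂ 2) (ι ℂ 2 * ι ℂ 0)
  | ore : OreRel (ι ℂ (2 : Fin 3) * ι ℂ 1) ((2 : ℂ) • ι ℂ 0 - ι ℂ 1 * ι ℂ 2)

noncomputable section SIso

abbrev Xs : RingQuot SRel := RingQuot.mkAlgHom ℂ SRel (ι ℂ 0)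
abbrev Ys : RingQuot SRel := RingQuot.mkAlgHom ℂ SRel (ι ℂ 1)
abbrev zo : RingQuot OreRel := RingQuot.mkAlgHom ℂ OreRel (ι ℂ 0)
abbrev Xo : RingQuot OreRel := RingQuot.mkAlgHom ℂ OreRel (ι ℂ 1)
abbrev Yo : RingQuot OreRel := RingQuot.mkAlgHom ℂ OreRel (ι ℂ 2)

lemma rel_zX : zo * Xo = Xo * zo := by
  simpa using RingQuot.mkAlgHom_rel ℂ OreRel.zX
lemma rel_zY : zo * Yo = Yo * zo := by
  simpa using RingQuot.mkAlgHom_rel ℂ OreRel.zY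
lemma rel_ore : Yo * Xo = (2 : ℂ) • zo - Xo * Yo := by
  simpa using RingQuot.mkAlgHom_rel ℂ OreRel.ore
lemma rel_x2y : Xs * Xs * Ys = Ys * (Xs * Xs) := by
  simpa using RingQuot.mkAlgHom_rel ℂ SRel.x2y
lemma rel_y2x : Ys * Ys * Xs = Xs * (Ys * Ys) := by
  simpa using RingQuot.mkAlgHom_rel ℂ SRel.y2x

noncomputable def fwd : RingQuot SRel →ₐ[ℂ] RingQuot OreRel :=
  RingQuot.liftAlgHom ℂ ⟨FreeAlgebra.lift ℂ ![Xo, Yo], by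
    rintro x y (h | h)
    · simp only [FreeAlgebra.lift_ι_apply, map_mul]
      show Xo * Xo * Yo = Yo * (Xo * Xo)
      calc Xo * Xo * Yo
          = Xo * (Xo * Yo) := by rw [mul_assoc]
        _ = Xo * ((2:ℂ) • zo - (Yo * Xo)) := by rw [rel_ore]; rw [sub_sub_cancel]
        _ = (2:ℂ) • (Xo * zo) - Xo * Yo * Xo := by
            rw [mul_sub, mul_smul_comm, mul_assoc]
        _ = (2:ℂ) • (zo * Xo) - Xo * Yo * Xo := by rw [rel_zX]
        _ = ((2:ℂ) • zo - Xo * Yo) * Xo := by rw [sub_mul, smul_mul_assoc]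
        _ = Yo * Xo * Xo := by rw [rel_ore]
        _ = Yo * (Xo * Xo) := by rw [mul_assoc]
    · simp only [FreeAlgebra.lift_ι_apply, map_mul]
      show Yo * Yo * Xo = Xo * (Yo * Yo)
      calc Yo * Yo * Xo
          = Yo * (Yo * Xo) := by rw [mul_assoc]
        _ = Yo * ((2:ℂ) • zo - Xo * Yo) := by rw [rel_ore]
        _ = (2:ℂ) • (Yo * zo) - Yo * Xo * Yo := by
            rw [mul_sub, mul_smul_comm, mul_assoc]
        _ = (2:ℂ) • (zo * Yo) - Yo * Xo * Yo := by rw [rel_zY]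
        _ = ((2:ℂ) • zo - Yo * Xo) * Yo := by rw [sub_mul, smul_mul_assoc]
        _ = ((2:ℂ) • zo - ((2:ℂ) • zo - Xo * Yo)) * Yo := by rw [rel_ore]
        _ = Xo * (Yo * Yo) := by rw [sub_sub_cancel, mul_assoc]⟩

noncomputable def bwd : RingQuot OreRel →ₐ[ℂ] RingQuot SRel :=
  RingQuot.liftAlgHom ℂ ⟨FreeAlgebra.lift ℂ ![(2:ℂ)⁻¹ • (Xs * Ys + Ys * Xs), Xs, Ys], by
    rintro x y (h | h | h)
    · simp only [FreeAlgebra.lift_ι_apply, map_mul]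
      show (2:ℂ)⁻¹ • (Xs * Ys + Ys * Xs) * Xs = Xs * ((2:ℂ)⁻¹ • (Xs * Ys + Ys * Xs))
      rw [smul_mul_assoc, mul_smul_comm, add_mul, mul_add]
      congr 1
      rw [← mul_assoc, ← mul_assoc, mul_assoc Ys Xs Xs, ← rel_x2y]
      rw [add_comm]
    · simp only [FreeAlgebra.lift_ι_apply, map_mul]
      show (2:ℂ)⁻¹ • (Xs * Ys + Ys * Xs) * Ys = Ys * ((2:ℂ)⁻¹ • (Xs * Ys + Ys * Xs))
      rw [smul_mul_assoc, mul_smul_comm, add_mul, mul_add]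
      congr 1
      rw [← mul_assoc, ← mul_assoc, mul_assoc Xs Ys Ys, ← rel_y2x]
      rw [add_comm]
    · simp only [FreeAlgebra.lift_ι_apply, map_mul, map_sub, map_smul]
      show Ys * Xs = (2:ℂ) • ((2:ℂ)⁻¹ • (Xs * Ys + Ys * Xs)) - Xs * Ys
      rw [smul_smul]
      norm_num⟩

/-- `S = ℂ⟨X,Y⟩/([X²,Y],[Y²,X])` is isomorphic to the Ore extension
`ℂ[z,X][Y;σ,δ]` via the map sending `X ↦ X` and `Y ↦ Y`. -/
theorem S_iso_ore_extension :
    ∃ e : RingQuot SRel ≃ₐ[ℂ] RingQuot OreRel,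
      e (RingQuot.mkAlgHom ℂ SRel (ι ℂ 0)) = RingQuot.mkAlgHom ℂ OreRel (ι ℂ 1) ∧
      e (RingQuot.mkAlgHom ℂ SRel (ι ℂ 1)) = RingQuot.mkAlgHom ℂ OreRel (ι ℂ 2) := by
  have hfX : fwd Xs = Xo := by
    simp [fwd, RingQuot.liftAlgHom_mkAlgHom_apply]
  have hfY : fwd Ys = Yo := by
    simp [fwd, RingQuot.liftAlgHom_mkAlgHom_apply]
  have hbz : bwd zo = (2:ℂ)⁻¹ • (Xs * Ys + Ys * Xs) := by
    simp [bwd, RingQuot.liftAlgHom_mkAlgHom_apply]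
  have hbX : bwd Xo = Xs := by
    simp [bwd, RingQuot.liftAlgHom_mkAlgHom_apply]
  have hbY : bwd Yo = Ys := by
    simp [bwd, RingQuot.liftAlgHom_mkAlgHom_apply]
  refine ⟨AlgEquiv.ofAlgHom fwd bwd ?_ ?_, hfX, hfY⟩
  · apply RingQuot.ringQuot_ext'
    apply FreeAlgebra.hom_ext
    funext i
    fin_cases i <;>
      simp only [Function.comp_apply, AlgHom.comp_apply, AlgHom.id_apply] <;>
      show fwd (bwd _) = _
    · show fwd (bwd zo) = zo
      rw [hbz, map_smul, map_add, map_mul, map_mul, hfX, hfY, rel_ore,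
        add_sub_cancel, smul_smul]
      norm_num
    · show fwd (bwd Xo) = Xo
      rw [hbX, hfX]
    · show fwd (bwd Yo) = Yo
      rw [hbY, hfY]
  · apply RingQuot.ringQuot_ext'
    apply FreeAlgebra.hom_ext
    funext i
    fin_cases i <;>
      simp only [Function.comp_apply, AlgHom.comp_apply, AlgHom.id_apply] <;>
      show bwd (fwd _) = _
    · show bwd (fwd Xs) = Xs
      rw [hfX, hbX]
    · show bwd (fwd Ys) = Ys
      rw [hfY, hbY]

end SIso
end
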